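/- arXiv:1306.6677 — 2 statements merged into one kernel-verified Lean document; each statement's English description precedes it below -/
import Mathlib

section
/- Fix a dataset {(x_i, y_i)}_{i=1}^N, constants C_0 >= 0 and C_1 > 0, a positive integer Lambda, and let L = { lambda in Z^P : |lambda_j| <= Lambda for all j }. If lambda* in L is a nonzero minimizer over L of the SLIM objective R_emp(lambda) + C_0 * ||lambda||_0 + C_1 * ||lambda||_1, then gcd(lambda*_1, ..., lambda*_P) = 1; that is, any feasible solution that is not coprime is not optimal. -/
/-! Dividing a feasible vector `λ` by `g = gcd λ ≥ 2` keeps it feasible, multiplies every margin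
`yᵢ xᵢᵀλ` by the positive factor `1/g` (so the 0-1 loss is unchanged), keeps the support, and
divides the `ℓ₁` norm by `g`; hence it strictly lowers the objective when `C₁ > 0`. -/

/-- The SLIM objective `R_emp(λ) + C₀‖λ‖₀ + C₁‖λ‖₁` for an integer coefficient
vector `λ` on a dataset `{(xᵢ, yᵢ)}`. -/
noncomputable def slimObjective {P N : ℕ} (x : Fin N → Fin P → ℝ)
    (y : Fin N → ℝ) (C₀ C₁ : ℝ) (lam : Fin P → ℤ) : ℝ :=
  (1 / N) * (∑ i, if y i * (∑ j, x i j * (lam j : ℝ)) ≤ 0 then (1 : ℝ) else 0)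
    + C₀ * ({j | lam j ≠ 0}.ncard : ℝ)
    + C₁ * ∑ j, |(lam j : ℝ)|

open Finset

section

variable {P N : ℕ} (x : Fin N → Fin P → ℝ) (y : Fin N → ℝ) (C₀ C₁ : ℝ)

theorem slimObjective_smul {g : ℤ} (hg : 0 < g) (mu : Fin P → ℤ) :
    slimObjective x y C₀ C₁ (g • mu)
      = slimObjective x y C₀ C₁ mu + C₁ * ((g : ℝ) - 1) * ∑ j, |(mu j : ℝ)| := by
  have hgR : (0 : ℝ) < g := by exact_mod_cast hg
  have hmargin : ∀ i, ∑ j, x i j * ((g * mu j : ℤ) : ℝ) = g * ∑ j, x i j * (mu j : ℝ) := by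
    intro i
    rw [mul_sum]
    exact sum_congr rfl fun j _ => by push_cast; ring
  have hloss : ∀ i, (y i * (g * ∑ j, x i j * (mu j : ℝ)) ≤ 0) ↔ y i * ∑ j, x i j * (mu j : ℝ) ≤ 0 :=
    fun i => by rw [mul_left_comm, ← mul_zero (g : ℝ), mul_le_mul_iff_right₀ hgR, mul_zero]
  have hsupp : {j | g * mu j ≠ 0} = {j | mu j ≠ 0} := by
    ext j
    simp [hg.ne']
  have hl1 : ∑ j, |((g * mu j : ℤ) : ℝ)| = g * ∑ j, |(mu j : ℝ)| := by
    rw [mul_sum]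
    exact sum_congr rfl fun j _ => by push_cast; rw [abs_mul, abs_of_pos hgR]
  simp only [slimObjective, Pi.smul_apply, smul_eq_mul, hmargin, hloss, hsupp, hl1]
  ring

theorem slimObjective_lt_smul {g : ℤ} (hg : 2 ≤ g) (hC₁ : 0 < C₁) {mu : Fin P → ℤ}
    (hmu : mu ≠ 0) : slimObjective x y C₀ C₁ mu < slimObjective x y C₀ C₁ (g • mu) := by
  obtain ⟨j₀, hj₀⟩ := Function.ne_iff.mp hmu
  have hl1 : 0 < ∑ j, |(mu j : ℝ)| :=
    (abs_pos.mpr (Int.cast_ne_zero.mpr hj₀)).trans_le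
      (single_le_sum (fun j _ => abs_nonneg (mu j : ℝ)) (mem_univ j₀))
  have hgR : (2 : ℝ) ≤ g := by exact_mod_cast hg
  rw [slimObjective_smul x y C₀ C₁ (by omega)]
  have : 0 < C₁ * ((g : ℝ) - 1) := mul_pos hC₁ (by linarith)
  linarith [mul_pos this hl1]

end

theorem Finset.gcd_int_nonneg {ι : Type*} (s : Finset ι) (f : ι → ℤ) : 0 ≤ s.gcd f :=
  Int.nonneg_of_normalize_eq_self (s.normalize_gcd (f := f))

theorem slim_minimizer_is_coprime_general
    {P N : ℕ} (x : Fin N → Fin P → ℝ) (y : Fin N → ℝ)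
    (C₀ C₁ : ℝ) (hC₁ : 0 < C₁)
    (Λ : ℕ)
    (lam : Fin P → ℤ) (hmem : ∀ j, |lam j| ≤ (Λ : ℤ)) (hne : lam ≠ 0)
    (hopt : ∀ mu : Fin P → ℤ, (∀ j, |mu j| ≤ (Λ : ℤ)) →
      slimObjective x y C₀ C₁ lam ≤ slimObjective x y C₀ C₁ mu) :
    Finset.univ.gcd lam = 1 := by
  set g := univ.gcd lam
  have hg0 : g ≠ 0 := fun h =>
    hne (funext fun j => gcd_eq_zero_iff.mp h j (mem_univ j))
  have hgpos : 0 < g := (univ.gcd_int_nonneg lam).lt_of_ne' hg0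
  by_contra hg1
  set mu : Fin P → ℤ := fun j => lam j / g
  have hlam : lam = g • mu :=
    funext fun j => (Int.mul_ediv_cancel' (gcd_dvd (mem_univ j))).symm
  have hmu : mu ≠ 0 := fun h => hne (by rw [hlam, h, smul_zero])
  have hfeas : ∀ j, |mu j| ≤ (Λ : ℤ) := fun j => calc
    |mu j| ≤ g * |mu j| := le_mul_of_one_le_left (abs_nonneg _) hgpos
    _ = |lam j| := by rw [hlam, Pi.smul_apply, smul_eq_mul, abs_mul, abs_of_pos hgpos]
    _ ≤ Λ := hmem j
  have hlt := slimObjective_lt_smul x y C₀ C₁ (g := g) (by omega) hC₁ hmu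
  rw [← hlam] at hlt
  exact (hopt mu hfeas).not_gt hlt

/-- Any nonzero minimizer of the SLIM objective over the bounded
integer vectors `L = {λ ∈ ℤ^P : |λⱼ| ≤ Λ}` must be coprime: a feasible solution
that is not coprime is not optimal. -/
theorem slim_minimizer_is_coprime
    {P N : ℕ} (x : Fin N → Fin P → ℝ) (y : Fin N → ℝ)
    (C₀ C₁ : ℝ) (hC₀ : 0 ≤ C₀) (hC₁ : 0 < C₁)
    (Λ : ℕ) (hΛ : 0 < Λ)
    (lam : Fin P → ℤ) (hmem : ∀ j, |lam j| ≤ (Λ : ℤ)) (hne : lam ≠ 0)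
    (hopt : ∀ mu : Fin P → ℤ, (∀ j, |mu j| ≤ (Λ : ℤ)) →
      slimObjective x y C₀ C₁ lam ≤ slimObjective x y C₀ C₁ mu) :
    Finset.univ.gcd lam = 1 :=
  slim_minimizer_is_coprime_general x y C₀ C₁ hC₁ Λ lam hmem hne hopt
end

section
/- Fix a dataset {(x_i, y_i)}_{i=1}^N, constants C_0 > 0 and C_1 > 0, and a finite set L of coefficient vectors in R^P with B = max_{lambda in L} ||lambda||_1 > 0. Suppose C_1 * B < min(1/N, C_0). Then for any lambda_1, lambda_2 in L such that R_emp(lambda_1) <= R_emp(lambda_2) and ||lambda_1||_0 <= ||lambda_2||_0 with at least one of the two inequalities strict, the full SLIM objective satisfies R_emp(lambda_1) + C_0 * ||lambda_1||_0 + C_1 * ||lambda_1||_1 < R_emp(lambda_2) + C_0 * ||lambda_2||_0 + C_1 * ||lambda_2||_1; that is, the tiny l1-penalty never overrides a difference in accuracy or sparsity. -/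
/-! The risk gap `1/N` and the sparsity gap `C₀` both dominate the whole `ℓ1`-penalty
`C₁ ‖λ‖₁ ≤ C₁ B`, so a strict improvement in accuracy or sparsity can never be undone by
the `ℓ1` term. -/

/-- The empirical 0-1 risk `R_emp(λ)` of a real coefficient vector `λ` on a
dataset `{(xᵢ, yᵢ)}`. -/
noncomputable def empRisk {P N : ℕ} (x : Fin N → Fin P → ℝ)
    (y : Fin N → ℝ) (lam : Fin P → ℝ) : ℝ :=
  (1 / N) * ∑ i, if y i * (∑ j, x i j * lam j) ≤ 0 then (1 : ℝ) else 0

lemma mul_natCast_add_le_of_lt {c : ℝ} {m n : ℕ} (hc : 0 ≤ c) (h : c * m < c * n) :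
    c * m + c ≤ c * n := by
  have hmn : m + 1 ≤ n := by exact_mod_cast lt_of_mul_lt_mul_left h hc
  calc c * m + c = c * ((m + 1 : ℕ) : ℝ) := by push_cast; ring
    _ ≤ c * n := mul_le_mul_of_nonneg_left (by exact_mod_cast hmn) hc

lemma empRisk_eq_card {P N : ℕ} (x : Fin N → Fin P → ℝ) (y : Fin N → ℝ)
    (lam : Fin P → ℝ) :
    empRisk x y lam =
      (1 / N) * ((Finset.univ.filter fun i => y i * (∑ j, x i j * lam j) ≤ 0).card : ℝ) := by
  rw [empRisk, Finset.sum_boole]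

lemma empRisk_add_le_of_lt {P N : ℕ} {x : Fin N → Fin P → ℝ} {y : Fin N → ℝ}
    {lam₁ lam₂ : Fin P → ℝ} (h : empRisk x y lam₁ < empRisk x y lam₂) :
    empRisk x y lam₁ + 1 / N ≤ empRisk x y lam₂ := by
  simp only [empRisk_eq_card] at h ⊢
  exact mul_natCast_add_le_of_lt (by positivity : (0 : ℝ) ≤ 1 / N) h

lemma min_le_sub_add_mul_sub {ε C r₁ r₂ : ℝ} {n₁ n₂ : ℕ} (hC : 0 ≤ C)
    (hgap : r₁ < r₂ → r₁ + ε ≤ r₂) (hr : r₁ ≤ r₂) (hn : n₁ ≤ n₂)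
    (hstrict : r₁ < r₂ ∨ n₁ < n₂) :
    min ε C ≤ r₂ - r₁ + C * (n₂ - n₁) := by
  have hn' : (n₁ : ℝ) ≤ n₂ := by exact_mod_cast hn
  have hCn : 0 ≤ C * (n₂ - n₁) := mul_nonneg hC (by linarith)
  rcases hstrict with hlt | hlt
  · linarith [hgap hlt, min_le_left ε C]
  · have hsucc : (n₁ : ℝ) + 1 ≤ n₂ := by exact_mod_cast hlt
    linarith [le_mul_of_one_le_right hC (by linarith : (1 : ℝ) ≤ n₂ - n₁), min_le_right ε C]

theorem slim_tiny_l1_penalty_never_overrides_general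
    {P N : ℕ} (x : Fin N → Fin P → ℝ) (y : Fin N → ℝ)
    (C₀ C₁ : ℝ) (hC₀ : 0 < C₀) (hC₁ : 0 < C₁)
    (L : Finset (Fin P → ℝ)) (B : ℝ)
    (hB : IsGreatest ((fun lam => ∑ j, |lam j|) '' (L : Set (Fin P → ℝ))) B)
    (hsmall : C₁ * B < min ((1 : ℝ) / N) C₀)
    (lam₁ lam₂ : Fin P → ℝ) (h₁ : lam₁ ∈ L)
    (hR : empRisk x y lam₁ ≤ empRisk x y lam₂)
    (hl0 : {j | lam₁ j ≠ 0}.ncard ≤ {j | lam₂ j ≠ 0}.ncard)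
    (hstrict : empRisk x y lam₁ < empRisk x y lam₂ ∨
      {j | lam₁ j ≠ 0}.ncard < {j | lam₂ j ≠ 0}.ncard) :
    empRisk x y lam₁ + C₀ * ({j | lam₁ j ≠ 0}.ncard : ℝ) +
        C₁ * ∑ j, |lam₁ j| <
      empRisk x y lam₂ + C₀ * ({j | lam₂ j ≠ 0}.ncard : ℝ) +
        C₁ * ∑ j, |lam₂ j| := by
  have hgap := min_le_sub_add_mul_sub hC₀.le empRisk_add_le_of_lt hR hl0 hstrict
  have hl1₁ : C₁ * ∑ j, |lam₁ j| ≤ C₁ * B :=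
    mul_le_mul_of_nonneg_left (hB.2 ⟨lam₁, h₁, rfl⟩) hC₁.le
  have hl1₂ : 0 ≤ C₁ * ∑ j, |lam₂ j| := by positivity
  linarith

/-- If `C₁ B < min(1/N, C₀)` where `B = max_{λ ∈ L} ‖λ‖₁ > 0`,
then for `λ₁, λ₂ ∈ L` with `R_emp(λ₁) ≤ R_emp(λ₂)` and `‖λ₁‖₀ ≤ ‖λ₂‖₀`, at
least one inequality strict, the full SLIM objective of `λ₁` is strictly
smaller than that of `λ₂`: the tiny `ℓ1`-penalty never overrides a difference
in accuracy or sparsity. -/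
theorem slim_tiny_l1_penalty_never_overrides
    {P N : ℕ} (hN : 0 < N) (x : Fin N → Fin P → ℝ) (y : Fin N → ℝ)
    (C₀ C₁ : ℝ) (hC₀ : 0 < C₀) (hC₁ : 0 < C₁)
    (L : Finset (Fin P → ℝ)) (B : ℝ) (hBpos : 0 < B)
    (hB : IsGreatest ((fun lam => ∑ j, |lam j|) '' (L : Set (Fin P → ℝ))) B)
    (hsmall : C₁ * B < min ((1 : ℝ) / N) C₀)
    (lam₁ lam₂ : Fin P → ℝ) (h₁ : lam₁ ∈ L) (h₂ : lam₂ ∈ L)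
    (hR : empRisk x y lam₁ ≤ empRisk x y lam₂)
    (hl0 : {j | lam₁ j ≠ 0}.ncard ≤ {j | lam₂ j ≠ 0}.ncard)
    (hstrict : empRisk x y lam₁ < empRisk x y lam₂ ∨
      {j | lam₁ j ≠ 0}.ncard < {j | lam₂ j ≠ 0}.ncard) :
    empRisk x y lam₁ + C₀ * ({j | lam₁ j ≠ 0}.ncard : ℝ) +
        C₁ * ∑ j, |lam₁ j| <
      empRisk x y lam₂ + C₀ * ({j | lam₂ j ≠ 0}.ncard : ℝ) +
        C₁ * ∑ j, |lam₂ j| :=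
  slim_tiny_l1_penalty_never_overrides_general x y C₀ C₁ hC₀ hC₁ L B hB hsmall lam₁ lam₂ h₁ hR hl0
    hstrict
end
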